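/- Let G be a group and S a finite generating set for G with 1 ∉ S, such that for every s ∈ S, the number of elements t ∈ S with st ≠ ts is at most c₀. Then the growth rate of G relative to S is at most log(2c₀ + 2) + 1; that is, limsup_{R→∞} (log #B_R(G, S))/R ≤ log(2c₀ + 2) + 1. -/

import Mathlib

/-! Write the elements of the ball as words over `T = S ∪ S⁻¹` and bring each word into
Cartier–Foata normal form: a sequence of blocks of pairwise commuting letters in which every
letter depends on (equals or does not commute with) some letter of the previous block. A letter
of `T` depends on at most `2c₀ + 1` letters of `T` (itself, and `s`, `s⁻¹` for the `s ∈ S` it does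
not commute with), so with `D = 2c₀ + 2` the blocks that may follow a block `P` are subsets of a
set of at most `D |P|` letters. By induction on `n`, at most `(D e)ⁿ e^|P|`
normal forms of size `≤ n` follow `P`: a first block `F` contributes
`(D e)^(n - |F|) e^|F| = (D e)ⁿ D^(-|F|)`, and `∑_F D^(-|F|) ≤ (1 + 1/D)^(D |P|) ≤ e^|P|`.
Hence `#B_R ≤ e^|T| (D e)^R`. -/

/-- The ball of radius `R` in a group `G` relative to a subset `S`:
elements expressible as products of at most `R` elements of `S ∪ S⁻¹`. -/
def ball {G : Type*} [Group G] (S : Set G) (R : ℕ) : Set G :=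
  {g | ∃ l : List G, l.length ≤ R ∧ (∀ t ∈ l, t ∈ S ∪ S⁻¹) ∧ l.prod = g}

lemma List.finite_setOf_length_le_forall_mem {α : Type*} (s : Set α) (hs : s.Finite)
    (n : ℕ) : {l : List α | l.length ≤ n ∧ ∀ x ∈ l, x ∈ s}.Finite := by
  have := hs.to_subtype
  refine ((List.finite_length_le s n).image (List.map Subtype.val)).subset ?_
  rintro l ⟨hl, hs⟩
  exact ⟨l.attach.map fun x => ⟨x.1, hs x.1 x.2⟩, by simpa using hl, by simp⟩

lemma Finset.sum_powerset_inv_pow_card_le_exp {α : Type*} (N : Finset α) {D p : ℕ}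
    (hD : 0 < D) (hN : N.card ≤ D * p) :
    ∑ F ∈ N.powerset, ((D : ℝ)⁻¹) ^ F.card ≤ Real.exp p := by
  have hD' : (0 : ℝ) < D := Nat.cast_pos.2 hD
  calc ∑ F ∈ N.powerset, ((D : ℝ)⁻¹) ^ F.card = ((D : ℝ)⁻¹ + 1) ^ N.card := by
        simpa using Finset.sum_pow_mul_eq_add_pow ((D : ℝ)⁻¹) 1 N
    _ ≤ Real.exp (D : ℝ)⁻¹ ^ N.card := by
        gcongr
        exact Real.add_one_le_exp _
    _ ≤ Real.exp (D : ℝ)⁻¹ ^ (D * p) :=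
        pow_le_pow_right₀ (Real.one_le_exp (by positivity)) hN
    _ = Real.exp p := by
        rw [← Real.exp_nat_mul]
        push_cast
        field_simp

open Filter in
lemma limsup_log_div_le_log {u : ℕ → ℕ} {C a : ℝ} (hu : ∀ R, 0 < u R) (hC : 0 < C)
    (ha : 0 < a) (hle : ∀ R, (u R : ℝ) ≤ C * a ^ R) :
    limsup (fun R : ℕ => Real.log (u R) / R) atTop ≤ Real.log a := by
  have hbound : ∀ᶠ R : ℕ in atTop, Real.log (u R) / R ≤ Real.log a + Real.log C / R := by
    refine eventually_atTop.2 ⟨1, fun R hR => ?_⟩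
    have hR' : (0 : ℝ) < R := Nat.cast_pos.2 hR
    rw [div_le_iff₀ hR', add_mul, div_mul_cancel₀ _ hR'.ne', mul_comm, ← Real.log_pow,
      ← Real.log_mul (by positivity) hC.ne', mul_comm]
    exact Real.log_le_log (Nat.cast_pos.2 (hu R)) (hle R)
  have htend : Tendsto (fun R : ℕ => Real.log a + Real.log C / R) atTop (nhds (Real.log a)) := by
    simpa using tendsto_const_nhds.add (tendsto_const_div_atTop_nhds_zero_nat (Real.log C))
  have hcobdd : IsCoboundedUnder (· ≤ ·) atTop fun R : ℕ => Real.log (u R) / R :=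
    isCoboundedUnder_le_of_le atTop fun R =>
      div_nonneg (Real.log_nonneg (Nat.one_le_cast.2 (hu R))) R.cast_nonneg
  exact (limsup_le_limsup hbound hcobdd htend.isBoundedUnder_le).trans_eq htend.limsup_eq

lemma ball_finite {G : Type*} [Group G] {S : Set G} (hS : S.Finite) (R : ℕ) :
    (ball S R).Finite :=
  ((List.finite_setOf_length_le_forall_mem _ (hS.union hS.inv) R).image List.prod).subset
    fun _ ⟨w, hlen, hw, hprod⟩ => ⟨w, ⟨hlen, hw⟩, hprod⟩

lemma one_mem_ball {G : Type*} [Group G] (S : Set G) (R : ℕ) : (1 : G) ∈ ball S R :=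
  ⟨[], by simp, by simp, rfl⟩

namespace CartierFoata

open scoped Classical

def size {α : Type*} (L : List (Finset α)) : ℕ := (L.map Finset.card).sum

@[simp] lemma size_nil {α : Type*} : size ([] : List (Finset α)) = 0 := rfl

@[simp] lemma size_cons {α : Type*} (F : Finset α) (L : List (Finset α)) :
    size (F :: L) = F.card + size L := List.sum_cons

variable {G : Type*} [Group G]

def Dependent (a b : G) : Prop := a = b ∨ ¬Commute a b

lemma Dependent.refl (a : G) : Dependent a a := Or.inl rfl

lemma commute_of_not_dependent {a b : G} (h : ¬Dependent a b) : Commute a b :=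
  not_not.1 fun h' => h (Or.inr h')

/-- `L` is a Cartier–Foata normal form over the alphabet `T` whose first block may follow the
block `P`. -/
inductive IsNormalForm (T : Finset G) : Finset G → List (Finset G) → Prop
  | nil (P : Finset G) : IsNormalForm T P []
  | cons {P F : Finset G} {L : List (Finset G)} (hFT : F ⊆ T) (hne : F.Nonempty)
      (hcomm : (F : Set G).Pairwise Commute) (hdep : ∀ b ∈ F, ∃ a ∈ P, Dependent a b)
      (hL : IsNormalForm T F L) : IsNormalForm T P (F :: L)

/-- The product of a block; the junk value `1` is never used on blocks of a normal form. -/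
noncomputable def blockProd (F : Finset G) : G :=
  if h : (F : Set G).Pairwise Commute then F.noncommProd id fun _ hx _ hy hxy => h hx hy hxy
  else 1

noncomputable def formProd (L : List (Finset G)) : G := (L.map blockProd).prod

@[simp] lemma formProd_nil : formProd ([] : List (Finset G)) = 1 := rfl

@[simp] lemma formProd_cons (F : Finset G) (L : List (Finset G)) :
    formProd (F :: L) = blockProd F * formProd L := List.prod_cons

@[simp] lemma blockProd_singleton (a : G) : blockProd ({a} : Finset G) = a := by
  rw [blockProd, dif_pos (by simp)]
  exact Finset.noncommProd_singleton _ _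

lemma pairwise_commute_insert {F : Finset G} {a : G} (hF : (F : Set G).Pairwise Commute)
    (haF : ∀ x ∈ F, Commute x a) : ((insert a F : Finset G) : Set G).Pairwise Commute := by
  rw [Finset.coe_insert]
  exact hF.insert fun x hx _ => ⟨(haF x hx).symm, haF x hx⟩

lemma blockProd_insert {F : Finset G} {a : G} (ha : a ∉ F) (hF : (F : Set G).Pairwise Commute)
    (haF : ∀ x ∈ F, Commute x a) : blockProd (insert a F) = blockProd F * a := by
  rw [blockProd, dif_pos (pairwise_commute_insert hF haF), blockProd, dif_pos hF]
  exact Finset.noncommProd_insert_of_notMem' _ _ _ _ ha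

lemma commute_blockProd {F : Finset G} {a : G} (h : ∀ x ∈ F, Commute x a) :
    Commute (blockProd F) a := by
  rw [blockProd]
  split
  · exact (Finset.noncommProd_commute _ _ _ _ fun x hx => (h x hx).symm).symm
  · exact Commute.one_left a

lemma commute_formProd {L : List (Finset G)} {a : G} (h : ∀ F ∈ L, ∀ x ∈ F, Commute x a) :
    Commute (formProd L) a :=
  Commute.list_prod_left _ _ fun _ hy => by
    obtain ⟨F, hF, rfl⟩ := List.mem_map.1 hy
    exact commute_blockProd (h F hF)

lemma IsNormalForm.mono {T P P' : Finset G} {L : List (Finset G)} (h : IsNormalForm T P L)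
    (hP : P ⊆ P') : IsNormalForm T P' L := by
  cases h with
  | nil => exact .nil P'
  | cons hFT hne hcomm hdep hL =>
    exact .cons hFT hne hcomm (fun b hb => (hdep b hb).imp fun a ha => ⟨hP ha.1, ha.2⟩) hL

/-- Appending a letter `a` to a normal form: `a` joins the block right after the last block
containing a letter that `a` depends on. -/
lemma IsNormalForm.append_letter {T : Finset G} {a : G} (haT : a ∈ T) :
    ∀ {P : Finset G} {L : List (Finset G)}, IsNormalForm T P L →
      ((∃ p ∈ P, Dependent p a) ∨ ∃ F ∈ L, ∃ x ∈ F, Dependent x a) →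
      ∃ L', IsNormalForm T P L' ∧ size L' = size L + 1 ∧ formProd L' = formProd L * a
  | P, [], _, hdep => by
    obtain ⟨p, hp, hpa⟩ := hdep.resolve_right (by simp)
    refine ⟨[{a}], .cons (by simpa) (by simp) (by simp) (by simpa using ⟨p, hp, hpa⟩) (.nil _),
      by simp, by simp⟩
  | P, F :: L, .cons hFT hne hcomm hdep hL, hdepa => by
    by_cases hlater : (∃ x ∈ F, Dependent x a) ∨ ∃ F' ∈ L, ∃ x ∈ F', Dependent x a
    · obtain ⟨L', hL', hsize, hprod⟩ := hL.append_letter haT hlater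
      exact ⟨F :: L', .cons hFT hne hcomm hdep hL', by simp [hsize, Nat.add_assoc],
        by simp [hprod, mul_assoc]⟩
    · simp only [not_or, not_exists, not_and] at hlater
      obtain ⟨hindF, hindL⟩ := hlater
      obtain ⟨p, hp, hpa⟩ : ∃ p ∈ P, Dependent p a := hdepa.resolve_right (by
        rintro ⟨F', hF', x, hx, hxa⟩
        rcases List.mem_cons.1 hF' with rfl | hF'
        exacts [hindF x hx hxa, hindL F' hF' x hx hxa])
      have haF : a ∉ F := fun h => hindF a h (.refl a)
      have hcommF : ∀ x ∈ F, Commute x a := fun x hx => commute_of_not_dependent (hindF x hx)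
      have hcommL : Commute (formProd L) a :=
        commute_formProd fun F' hF' x hx => commute_of_not_dependent (hindL F' hF' x hx)
      refine ⟨insert a F :: L, .cons (Finset.insert_subset haT hFT) (Finset.insert_nonempty _ _)
        (pairwise_commute_insert hcomm hcommF) ?_ (hL.mono (Finset.subset_insert a F)), ?_, ?_⟩
      · intro b hb
        rcases Finset.mem_insert.1 hb with rfl | hb
        exacts [⟨p, hp, hpa⟩, hdep b hb]
      · simp only [size_cons, Finset.card_insert_of_notMem haF]
        omega
      · rw [formProd_cons, formProd_cons, blockProd_insert haF hcomm hcommF, mul_assoc,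
          ← hcommL.eq, mul_assoc]

lemma exists_isNormalForm (T : Finset G) (w : List G) (hw : ∀ t ∈ w, t ∈ T) :
    ∃ L, IsNormalForm T T L ∧ size L = w.length ∧ formProd L = w.prod := by
  induction w using List.reverseRecOn with
  | nil => exact ⟨[], .nil T, rfl, rfl⟩
  | append_singleton w a ih =>
    obtain ⟨L, hL, hsize, hprod⟩ := ih fun t ht => hw t (List.mem_append_left _ ht)
    have haT : a ∈ T := hw a (by simp)
    obtain ⟨L', hL', hsize', hprod'⟩ := hL.append_letter haT (.inl ⟨a, haT, .refl a⟩)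
    exact ⟨L', hL', by simp [hsize', hsize], by simp [hprod', hprod]⟩

lemma IsNormalForm.subset {T P : Finset G} {L : List (Finset G)} (h : IsNormalForm T P L) :
    ∀ F ∈ L, F ⊆ T := by
  induction h with
  | nil => simp
  | cons hFT _ _ _ _ ih => simpa [hFT] using ih

lemma IsNormalForm.length_le_size {T P : Finset G} {L : List (Finset G)}
    (h : IsNormalForm T P L) : L.length ≤ size L := by
  induction h with
  | nil => simp
  | cons _ hne _ _ _ ih =>
    have := Finset.card_pos.2 hne
    simp only [List.length_cons, size_cons]
    omega

noncomputable def successors (T P : Finset G) : Finset G := T.filter fun b => ∃ a ∈ P, Dependent a b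

def normalForms (T P : Finset G) (n : ℕ) : Set (List (Finset G)) :=
  {L | IsNormalForm T P L ∧ size L ≤ n}

lemma normalForms_finite (T P : Finset G) (n : ℕ) : (normalForms T P n).Finite :=
  (List.finite_setOf_length_le_forall_mem _ (T.powerset : Set (Finset G)).toFinite n).subset
    fun _ ⟨hL, hsize⟩ => ⟨hL.length_le_size.trans hsize,
      fun F hF => Finset.mem_coe.2 (Finset.mem_powerset.2 (hL.subset F hF))⟩

lemma card_successors_le {T P : Finset G} {D : ℕ}
    (hdeg : ∀ a ∈ T, (T.filter (Dependent a)).card ≤ D) (hP : P ⊆ T) :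
    (successors T P).card ≤ D * P.card := by
  have hsub : successors T P ⊆ P.biUnion fun a => T.filter (Dependent a) := by
    intro b hb
    obtain ⟨hbT, a, haP, hab⟩ := Finset.mem_filter.1 hb
    exact Finset.mem_biUnion.2 ⟨a, haP, Finset.mem_filter.2 ⟨hbT, hab⟩⟩
  calc (successors T P).card ≤ ∑ a ∈ P, (T.filter (Dependent a)).card :=
        (Finset.card_le_card hsub).trans Finset.card_biUnion_le
    _ ≤ ∑ _a ∈ P, D := Finset.sum_le_sum fun a ha => hdeg a (hP ha)
    _ = D * P.card := by rw [Finset.sum_const, smul_eq_mul, mul_comm]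

noncomputable def firstBlocks (T P : Finset G) (n : ℕ) : Finset (Finset G) :=
  (successors T P).powerset.filter fun F => F.Nonempty ∧ F.card ≤ n

lemma normalForms_subset (T P : Finset G) (n : ℕ) :
    normalForms T P n ⊆
      insert [] (⋃ F ∈ firstBlocks T P n, (F :: ·) '' normalForms T F (n - F.card)) := by
  rintro _ ⟨hL, hsize⟩
  cases hL with
  | nil => exact Set.mem_insert _ _
  | @cons _ F L hFT hne _ hdep hL =>
    rw [size_cons] at hsize
    have hF : F ∈ firstBlocks T P n := Finset.mem_filter.2 ⟨Finset.mem_powerset.2 fun b hb =>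
      Finset.mem_filter.2 ⟨hFT hb, hdep b hb⟩, hne, by omega⟩
    exact Set.mem_insert_of_mem _ (Set.mem_biUnion hF ⟨L, ⟨hL, by omega⟩, rfl⟩)

lemma ncard_normalForms_le_one_add_sum (T P : Finset G) (n : ℕ) :
    (normalForms T P n).ncard ≤
      1 + ∑ F ∈ firstBlocks T P n, (normalForms T F (n - F.card)).ncard := by
  have hfin : ∀ F ∈ firstBlocks T P n,
      ((F :: ·) '' normalForms T F (n - F.card)).Finite :=
    fun F _ => (normalForms_finite T F _).image _
  calc (normalForms T P n).ncard
      ≤ (insert [] (⋃ F ∈ firstBlocks T P n, (F :: ·) '' normalForms T F (n - F.card))).ncard :=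
        Set.ncard_le_ncard (normalForms_subset T P n)
          ((Set.Finite.biUnion (Finset.finite_toSet _) hfin).insert _)
    _ ≤ (⋃ F ∈ firstBlocks T P n, (F :: ·) '' normalForms T F (n - F.card)).ncard + 1 :=
        Set.ncard_insert_le _ _
    _ ≤ (∑ F ∈ firstBlocks T P n, ((F :: ·) '' normalForms T F (n - F.card)).ncard) + 1 := by
        gcongr
        exact Finset.set_ncard_biUnion_le _ _
    _ ≤ (∑ F ∈ firstBlocks T P n, (normalForms T F (n - F.card)).ncard) + 1 := by
        gcongr 1
        exact Finset.sum_le_sum fun F _ => Set.ncard_image_le (normalForms_finite T F _)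
    _ = _ := add_comm _ _

theorem ncard_normalForms_le {T : Finset G} {D : ℕ} (hD : 0 < D)
    (hdeg : ∀ a ∈ T, (T.filter (Dependent a)).card ≤ D) (n : ℕ) {P : Finset G} (hP : P ⊆ T) :
    ((normalForms T P n).ncard : ℝ) ≤ (D * Real.exp 1) ^ n * Real.exp P.card := by
  induction n using Nat.strong_induction_on generalizing P with
  | _ n ih =>
  set t : ℝ := D * Real.exp 1
  have ht : 1 ≤ t :=
    one_le_mul_of_one_le_of_one_le (Nat.one_le_cast.2 hD) (Real.one_le_exp zero_le_one)
  have hterm : ∀ F ∈ firstBlocks T P n,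
      ((normalForms T F (n - F.card)).ncard : ℝ) ≤ t ^ n * ((D : ℝ)⁻¹) ^ F.card := by
    intro F hF
    obtain ⟨hFsucc, hne, hFn⟩ := Finset.mem_filter.1 hF
    have hFT : F ⊆ T := (Finset.mem_powerset.1 hFsucc).trans (Finset.filter_subset _ _)
    calc ((normalForms T F (n - F.card)).ncard : ℝ) ≤ t ^ (n - F.card) * Real.exp F.card :=
          ih _ (Nat.sub_lt (hne.card_pos.trans_le hFn) hne.card_pos) hFT
      _ = t ^ n * ((D : ℝ)⁻¹) ^ F.card := by
          rw [← pow_sub_mul_pow t hFn, ← Real.exp_one_pow, mul_assoc, ← mul_pow]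
          congr 2
          rw [mul_comm, inv_mul_cancel_left₀ (Nat.cast_ne_zero.2 hD.ne')]
  have hempty : (∅ : Finset G) ∉ firstBlocks T P n := fun h =>
    Finset.not_nonempty_empty (Finset.mem_filter.1 h).2.1
  calc ((normalForms T P n).ncard : ℝ)
      ≤ 1 + ∑ F ∈ firstBlocks T P n, ((normalForms T F (n - F.card)).ncard : ℝ) := by
        exact_mod_cast ncard_normalForms_le_one_add_sum T P n
    _ ≤ ∑ F ∈ insert ∅ (firstBlocks T P n), t ^ n * ((D : ℝ)⁻¹) ^ F.card := by
        rw [Finset.sum_insert hempty, Finset.card_empty, pow_zero, mul_one]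
        exact add_le_add (one_le_pow₀ ht) (Finset.sum_le_sum hterm)
    _ ≤ ∑ F ∈ (successors T P).powerset, t ^ n * ((D : ℝ)⁻¹) ^ F.card :=
        Finset.sum_le_sum_of_subset_of_nonneg
          (Finset.insert_subset (Finset.empty_mem_powerset _) (Finset.filter_subset _ _))
          fun _ _ _ => by positivity
    _ ≤ t ^ n * Real.exp P.card := by
        rw [← Finset.mul_sum]
        gcongr
        exact (successors T P).sum_powerset_inv_pow_card_le_exp hD (card_successors_le hdeg hP)

lemma ball_subset_image_formProd {S : Set G} {T : Finset G} (hST : S ∪ S⁻¹ ⊆ T) (R : ℕ) :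
    ball S R ⊆ formProd '' normalForms T T R := by
  rintro _ ⟨w, hlen, hw, rfl⟩
  obtain ⟨L, hL, hsize, hprod⟩ := exists_isNormalForm T w fun t ht => hST (hw t ht)
  exact ⟨L, ⟨hL, hsize ▸ hlen⟩, hprod⟩

theorem ncard_ball_le {S : Set G} {T : Finset G} (hST : S ∪ S⁻¹ ⊆ T) {D : ℕ} (hD : 0 < D)
    (hdeg : ∀ a ∈ T, (T.filter (Dependent a)).card ≤ D) (R : ℕ) :
    ((ball S R).ncard : ℝ) ≤ Real.exp T.card * (D * Real.exp 1) ^ R := by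
  calc ((ball S R).ncard : ℝ) ≤ (formProd '' normalForms T T R).ncard := by
        exact_mod_cast Set.ncard_le_ncard (ball_subset_image_formProd hST R)
          ((normalForms_finite T T R).image _)
    _ ≤ (normalForms T T R).ncard := by
        exact_mod_cast Set.ncard_image_le (normalForms_finite T T R)
    _ ≤ Real.exp T.card * (D * Real.exp 1) ^ R := by
        rw [mul_comm]
        exact ncard_normalForms_le hD hdeg R subset_rfl

lemma ncard_setOf_dependent_le {S : Set G} (hS : S.Finite) {c : ℕ}
    (hcomm : ∀ s ∈ S, {t ∈ S | s * t ≠ t * s}.ncard ≤ c) {a : G} (ha : a ∈ S ∪ S⁻¹) :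
    {b ∈ S ∪ S⁻¹ | Dependent a b}.ncard ≤ 2 * c + 1 := by
  obtain ⟨s, hs, hcommute_iff⟩ : ∃ s ∈ S, ∀ b, Commute a b ↔ Commute s b := by
    rcases ha with ha | ha
    exacts [⟨a, ha, fun _ => Iff.rfl⟩, ⟨a⁻¹, ha, fun _ => Commute.inv_left_iff.symm⟩]
  set NC := {t ∈ S | s * t ≠ t * s}
  have hNC : NC.Finite := hS.subset (Set.sep_subset _ _)
  have hsub : {b ∈ S ∪ S⁻¹ | Dependent a b} ⊆ insert a (NC ∪ NC⁻¹) := by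
    rintro b ⟨hb, rfl | hab⟩
    · exact Set.mem_insert _ _
    · rw [hcommute_iff] at hab
      refine Set.mem_insert_of_mem _ ?_
      rcases hb with hb | hb
      exacts [.inl ⟨hb, hab⟩, .inr ⟨hb, fun h => hab (Commute.inv_right_iff.1 h)⟩]
  calc {b ∈ S ∪ S⁻¹ | Dependent a b}.ncard ≤ (insert a (NC ∪ NC⁻¹)).ncard :=
        Set.ncard_le_ncard hsub ((hNC.union hNC.inv).insert a)
    _ ≤ NC.ncard + NC⁻¹.ncard + 1 :=
        (Set.ncard_insert_le _ _).trans (Nat.add_le_add_right (Set.ncard_union_le _ _) 1)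
    _ ≤ 2 * c + 1 := by
        rw [Set.ncard_inv]
        have : NC.ncard ≤ c := hcomm s hs
        omega

end CartierFoata

theorem growth_le_of_commuting_gens_general {G : Type*} [Group G] (S : Set G) (c₀ : ℕ)
    (hfin : S.Finite)
    (hcomm : ∀ s ∈ S, {t ∈ S | s * t ≠ t * s}.ncard ≤ c₀) :
    Filter.limsup (fun R : ℕ => Real.log ((ball S R).ncard) / R) Filter.atTop
      ≤ Real.log (2 * (c₀ : ℝ) + 2) + 1 := by
  classical
  set T := (hfin.union hfin.inv).toFinset
  have hT : (T : Set G) = S ∪ S⁻¹ := Set.Finite.coe_toFinset _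
  have hdeg : ∀ a ∈ T, (T.filter (CartierFoata.Dependent a)).card ≤ 2 * c₀ + 2 := by
    intro a ha
    rw [← Set.ncard_coe_finset, Finset.coe_filter]
    simp only [T, Set.Finite.mem_toFinset]
    exact (CartierFoata.ncard_setOf_dependent_le hfin hcomm (hT ▸ ha)).trans (Nat.le_succ _)
  have hpos : ∀ R, 0 < (ball S R).ncard := fun R =>
    (Set.ncard_pos (ball_finite hfin R)).2 ⟨1, one_mem_ball S R⟩
  have hgrowth : Real.log (2 * (c₀ : ℝ) + 2) + 1 = Real.log ((2 * c₀ + 2 : ℕ) * Real.exp 1) := by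
    rw [Real.log_mul (by positivity) (Real.exp_pos 1).ne', Real.log_exp]
    push_cast
    rfl
  rw [hgrowth]
  exact limsup_log_div_le_log hpos (Real.exp_pos _) (by positivity)
    (CartierFoata.ncard_ball_le hT.ge (by omega) hdeg)

/-- If `S` is a finite generating set of `G` with `1 ∉ S` such that each `s ∈ S` fails to
commute with at most `c₀` elements of `S`, then the growth rate of `G` relative to `S`
is at most `log (2c₀ + 2) + 1`. -/
theorem growth_le_of_commuting_gens {G : Type*} [Group G] (S : Set G) (c₀ : ℕ)
    (hfin : S.Finite) (hone : (1 : G) ∉ S)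
    (hgen : Subgroup.closure S = ⊤)
    (hcomm : ∀ s ∈ S, {t ∈ S | s * t ≠ t * s}.ncard ≤ c₀) :
    Filter.limsup (fun R : ℕ => Real.log ((ball S R).ncard) / R) Filter.atTop
      ≤ Real.log (2 * (c₀ : ℝ) + 2) + 1 :=
  growth_le_of_commuting_gens_general S c₀ hfin hcomm
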